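/- Let A be a finite-dimensional commutative k-algebra with basis {e_w}_{w∈W} and trace ⟨·⟩ with nondegenerate induced pairing. Define the third derivatives Λ_{uvw}(t) = ∂³F/∂t_u∂t_v∂t_w of F(t) = ⟨exp(∑ t_w e_w)⟩ and the metric g_{uv} = ⟨e_u e_v⟩ with inverse g^{uv}. Then for all i, j, k, l ∈ W the WDVV equation holds: ∑_{ν,μ} Λ_{ijν}(t) g^{νμ} Λ_{μkl}(t) = ∑_{ν,μ} Λ_{ilν}(t) g^{νμ} Λ_{μjk}(t). -/

import Mathlib

open MvPowerSeries Finset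

/-- Formal partial derivative `∂/∂t_u` of a multivariate formal power series,
acting coefficientwise. -/
noncomputable def fpderiv {W : Type*} {R : Type*} [AddCommMonoid R] (u : W)
    (f : MvPowerSeries W R) : MvPowerSeries W R :=
  fun d => (d u + 1) • f (d + Finsupp.single u 1)

/-- The formal exponential kernel `K(t) = exp (∑_w t_w e_w)`, defined by its
coefficients: the coefficient of `∏ t_w^{d_w}` is `(∏ d_w!)⁻¹ • ∏ e_w^{d_w}`. -/
noncomputable def kker (k : Type*) [Field k] {W A : Type*} [CommRing A] [Algebra k A]
    (e : W → A) : MvPowerSeries W A :=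
  fun d => (((d.prod fun _ n => n.factorial : ℕ) : k))⁻¹ • (d.prod fun w n => e w ^ n)

/-- Coefficientwise extension of a linear functional `A → k` to
`A ⊗ k[[t_w]] → k[[t_w]]`. -/
noncomputable def trExt {k W A : Type*} [Field k] [CommRing A] [Algebra k A]
    (φ : A →ₗ[k] k) (f : MvPowerSeries W A) : MvPowerSeries W k :=
  fun d => φ (f d)

/-- The third partial derivatives `Λ_{uvw}(t) = ∂³F/∂t_u∂t_v∂t_w` of the potential
`F(t) = ⟨exp (∑ t_w e_w)⟩`. -/
noncomputable def lambda3 {k : Type*} [Field k]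
    {A : Type*} [CommRing A] [Algebra k A]
    {W : Type*} (e : W → A) (φ : A →ₗ[k] k) (u v w : W) : MvPowerSeries W k :=
  fpderiv u (fpderiv v (fpderiv w (trExt φ (kker k e))))

/-!
Since `∂_u K = e_u K`, the third derivatives are `Λ_{uvw} = ⟨e_u e_v e_w K⟩`. The inverse metric
resolves the trace pairing, `∑_{ν,μ} g^{νμ} ⟨x e_ν⟩ ⟨e_μ y⟩ = ⟨x y⟩`, and applied coefficientwise
this turns the left side of WDVV into `⟨(e_i e_j K)(e_l e_m K)⟩` and the right side into
`⟨(e_i e_m K)(e_j e_l K)⟩`, which agree because `A[[t]]` is commutative and associative.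
-/
open Finsupp in
theorem Finsupp.prod_factorial_add_single {W : Type*} (d : W →₀ ℕ) (u : W) :
    (d + single u 1).prod (fun _ n => n.factorial) =
      (d u + 1) * d.prod (fun _ n => n.factorial) := by
  rw [← mul_prod_erase' d u _ (fun _ => rfl), ← mul_prod_erase' (d + single u 1) u _ (fun _ => rfl),
    erase_add, erase_single, add_zero]
  simp [Nat.factorial_succ, mul_assoc]

open Finsupp in
theorem Finsupp.prod_pow_add_single {W M : Type*} [CommMonoid M] (d : W →₀ ℕ) (u : W) (e : W → M) :
    (d + single u 1).prod (fun w n => e w ^ n) = e u * d.prod (fun w n => e w ^ n) := by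
  rw [prod_add_index' (fun _ => pow_zero _) (fun _ _ _ => pow_add _ _ _),
    prod_single_index (h := fun w n => e w ^ n) (pow_zero _), pow_one, mul_comm]

section Derivatives

variable {k W A : Type*} [Field k] [CommRing A] [Algebra k A]

theorem fpderiv_trExt (φ : A →ₗ[k] k) (u : W) (f : MvPowerSeries W A) :
    fpderiv u (trExt φ f) = trExt φ (fpderiv u f) :=
  funext fun _ => (map_nsmul φ _ _).symm

theorem fpderiv_C_mul (u : W) (a : A) (f : MvPowerSeries W A) :
    fpderiv u (C a * f) = C a * fpderiv u f := by
  ext d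
  show (d u + 1) • coeff (d + Finsupp.single u 1) (C a * f) = coeff d (C a * fpderiv u f)
  rw [coeff_C_mul, coeff_C_mul]
  exact (mul_smul_comm _ _ _).symm

theorem fpderiv_kker [CharZero k] (e : W → A) (u : W) :
    fpderiv u (kker k e) = C (e u) * kker k e := by
  ext d
  rw [coeff_C_mul]
  show (d u + 1) • kker k e (d + Finsupp.single u 1) = e u * kker k e d
  simp only [kker, Finsupp.prod_factorial_add_single, Finsupp.prod_pow_add_single, Nat.cast_mul,
    mul_inv, ← Nat.cast_smul_eq_nsmul k, smul_smul, mul_smul_comm,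
    mul_inv_cancel_left₀ ((Nat.cast_ne_zero (R := k)).mpr (d u).succ_ne_zero)]

theorem lambda3_eq_trExt [CharZero k] (e : W → A) (φ : A →ₗ[k] k) (u v w : W) :
    lambda3 e φ u v w = trExt φ (C (e u * e v * e w) * kker k e) := by
  simp only [lambda3, fpderiv_kker, fpderiv_C_mul, fpderiv_trExt, ← mul_assoc, ← map_mul]
  ring_nf

end Derivatives

theorem coeff_trExt {k A W : Type*} [Field k] [CommRing A] [Algebra k A] (φ : A →ₗ[k] k)
    (f : MvPowerSeries W A) (d : W →₀ ℕ) :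
    coeff d (trExt φ f) = φ (coeff d f) :=
  rfl

section Pairing

variable {k A W : Type*} [Field k] [CommRing A] [Algebra k A] [Fintype W] [DecidableEq W]
  (b : Module.Basis W k A) (φ : A →ₗ[k] k) (ginv : W → W → k)

theorem sum_ginv_mul_apply_mul_apply
    (hg : ∀ u v : W, (∑ τ : W, φ ((b u : A) * b τ) * ginv τ v) = if u = v then 1 else 0)
    (x y : A) :
    ∑ ν : W, ∑ μ : W, ginv ν μ * (φ (x * b ν) * φ (b μ * y)) = φ (x * y) := by
  -- Both sides are linear in `x`; on a basis vector `x = b ρ` the identity is `hg`.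
  have hlin : ∑ ν : W, ∑ μ : W, (ginv ν μ * φ (b μ * y)) • (φ ∘ₗ LinearMap.mulRight k (b ν)) =
      φ ∘ₗ LinearMap.mulRight k y := by
    refine b.ext fun ρ => ?_
    simp only [LinearMap.sum_apply, LinearMap.smul_apply, LinearMap.comp_apply,
      LinearMap.mulRight_apply, smul_eq_mul]
    calc ∑ ν : W, ∑ μ : W, ginv ν μ * φ (b μ * y) * φ (b ρ * b ν)
        = ∑ μ : W, (∑ ν : W, φ (b ρ * b ν) * ginv ν μ) * φ (b μ * y) := by
          rw [Finset.sum_comm]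
          refine sum_congr rfl fun μ _ => ?_
          rw [Finset.sum_mul]
          exact sum_congr rfl fun ν _ => by ring
      _ = φ (b ρ * y) := by simp [hg]
  have hx := LinearMap.congr_fun hlin x
  simp only [LinearMap.sum_apply, LinearMap.smul_apply, LinearMap.comp_apply,
    LinearMap.mulRight_apply, smul_eq_mul] at hx
  rw [← hx]
  exact sum_congr rfl fun ν _ => sum_congr rfl fun μ _ => by ring

theorem sum_ginv_smul_trExt_mul_trExt
    (hg : ∀ u v : W, (∑ τ : W, φ ((b u : A) * b τ) * ginv τ v) = if u = v then 1 else 0)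
    (f g : MvPowerSeries W A) :
    ∑ ν : W, ∑ μ : W, ginv ν μ • (trExt φ (f * C (b ν)) * trExt φ (C (b μ) * g)) =
      trExt φ (f * g) := by
  ext d
  rw [coeff_trExt, coeff_mul, map_sum]
  simp only [map_sum, coeff_smul, coeff_mul (R := k), coeff_trExt, coeff_mul_C,
    coeff_C_mul, mul_sum]
  refine (sum_congr rfl fun ν _ => sum_comm).trans (sum_comm.trans (sum_congr rfl fun p _ => ?_))
  exact sum_ginv_mul_apply_mul_apply b φ ginv hg _ _

theorem sum_ginv_smul_lambda3_mul_lambda3 [CharZero k]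
    (hg : ∀ u v : W, (∑ τ : W, φ ((b u : A) * b τ) * ginv τ v) = if u = v then 1 else 0)
    (p q r s : W) :
    ∑ ν : W, ∑ μ : W, ginv ν μ • (lambda3 (fun τ => (b τ : A)) φ p q ν *
        lambda3 (fun τ => (b τ : A)) φ μ r s) =
      trExt φ (C (b p * b q) * kker k (fun τ => (b τ : A)) *
        (C (b r * b s) * kker k (fun τ => (b τ : A)))) := by
  rw [← sum_ginv_smul_trExt_mul_trExt b φ ginv hg]
  refine sum_congr rfl fun ν _ => sum_congr rfl fun μ _ => ?_
  simp only [lambda3_eq_trExt, map_mul]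
  congr 3 <;> ring

end Pairing

theorem stmt4_general {k : Type*} [Field k] [CharZero k]
    {A : Type*} [CommRing A] [Algebra k A]
    {W : Type*} [Fintype W] [DecidableEq W]
    (b : Module.Basis W k A) (φ : A →ₗ[k] k)
    (ginv : W → W → k)
    (hg : ∀ u v : W, (∑ τ : W, φ ((b u : A) * b τ) * ginv τ v) = if u = v then 1 else 0)
    (i j l m : W) :
    (∑ ν : W, ∑ μ : W, ginv ν μ •
        (lambda3 (fun τ => (b τ : A)) φ i j ν * lambda3 (fun τ => (b τ : A)) φ μ l m)) =
      ∑ ν : W, ∑ μ : W, ginv ν μ •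
        (lambda3 (fun τ => (b τ : A)) φ i m ν * lambda3 (fun τ => (b τ : A)) φ μ j l) := by
  rw [sum_ginv_smul_lambda3_mul_lambda3 b φ ginv hg, sum_ginv_smul_lambda3_mul_lambda3 b φ ginv hg]
  congr 1
  simp only [map_mul]
  ring

/-- Corollary 2.2: the potential `F(t) = ⟨exp(∑ t_w e_w)⟩` satisfies
the WDVV equation `∑_{ν,μ} Λ_{ijν} g^{νμ} Λ_{μkl} = ∑_{ν,μ} Λ_{ilν} g^{νμ} Λ_{μjk}`. -/
theorem stmt4 {k : Type*} [Field k] [CharZero k]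
    {A : Type*} [CommRing A] [Algebra k A] [FiniteDimensional k A]
    {W : Type*} [Fintype W] [DecidableEq W]
    (b : Module.Basis W k A) (φ : A →ₗ[k] k)
    (hnd : ∀ a : A, (∀ a' : A, φ (a * a') = 0) → a = 0)
    (ginv : W → W → k)
    (hg : ∀ u v : W, (∑ τ : W, φ ((b u : A) * b τ) * ginv τ v) = if u = v then 1 else 0)
    (hg' : ∀ u v : W, (∑ τ : W, ginv u τ * φ ((b τ : A) * b v)) = if u = v then 1 else 0)
    (i j l m : W) :
    (∑ ν : W, ∑ μ : W, ginv ν μ •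
        (lambda3 (fun τ => (b τ : A)) φ i j ν * lambda3 (fun τ => (b τ : A)) φ μ l m)) =
      ∑ ν : W, ∑ μ : W, ginv ν μ •
        (lambda3 (fun τ => (b τ : A)) φ i m ν * lambda3 (fun τ => (b τ : A)) φ μ j l) :=
  stmt4_general b φ ginv hg i j l m
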